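/- arXiv:2404.00037 — 7 statements merged into one kernel-verified Lean document; each statement's English description precedes it below -/
import Mathlib

section
/- Let (V,g,φ,ζ,η) be an almost contact metric vector space, ξ,N lightlike with g(ξ,N)=1, a=η(N), b=η(ξ). Suppose ζ = W' + f₁φN + f₂φξ + aξ + bN where W' is orthogonal to ξ, N, φξ, φN. Then b²f₂ = f₁(1-ab) and a²f₁ = f₂(1-ab); consequently (2ab-1)f₁ = 0 and (2ab-1)f₂ = 0. -/
/-- If ζ = W' + f₁φN + f₂φξ + aξ + bN with W' orthogonal to ξ, N, φξ, φN, then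
b²f₂ = f₁(1-ab), a²f₁ = f₂(1-ab), (2ab-1)f₁ = 0 and (2ab-1)f₂ = 0. -/
theorem almost_contact_metric_zeta_full_decomposition
    {V : Type*} [AddCommGroup V] [Module ℝ V]
    (g : V →ₗ[ℝ] V →ₗ[ℝ] ℝ) (φ : V →ₗ[ℝ] V) (ζ : V) (η : V →ₗ[ℝ] ℝ)
    (hsymm : ∀ X Y : V, g X Y = g Y X)
    (hηζ : η ζ = 1)
    (hφ2 : ∀ X : V, φ (φ X) = -X + η X • ζ)
    (hcomp : ∀ X Y : V, g (φ X) (φ Y) = g X Y - η X * η Y)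
    (hgζ : ∀ X : V, g X ζ = η X)
    (hskew : ∀ X Y : V, g (φ X) Y = -(g X (φ Y)))
    (ξ N : V) (hξξ : g ξ ξ = 0) (hNN : g N N = 0) (hξN : g ξ N = 1)
    (a b : ℝ) (ha : a = η N) (hb : b = η ξ)
    (W' : V) (f₁ f₂ : ℝ)
    (hW'ξ : g W' ξ = 0) (hW'N : g W' N = 0)
    (hW'φξ : g W' (φ ξ) = 0) (hW'φN : g W' (φ N) = 0)
    (hζ : ζ = W' + f₁ • φ N + f₂ • φ ξ + a • ξ + b • N) :
    b ^ 2 * f₂ = f₁ * (1 - a * b) ∧ a ^ 2 * f₁ = f₂ * (1 - a * b) ∧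
      (2 * a * b - 1) * f₁ = 0 ∧ (2 * a * b - 1) * f₂ = 0 := by
  -- φ ζ = 0
  have hφζζ : g (φ ζ) ζ = 0 := by
    have h1 := hskew ζ ζ
    have h2 := hsymm (φ ζ) ζ
    linarith [h1, h2]
  have hηφζ : η (φ ζ) = 0 := by rw [← hgζ (φ ζ)]; exact hφζζ
  have hφ2ζ : φ (φ ζ) = 0 := by
    rw [hφ2 ζ, hηζ, one_smul]; abel
  have hφζ : φ ζ = 0 := by
    have h3 := hφ2 (φ ζ)
    rw [hφ2ζ, map_zero, hηφζ, zero_smul, add_zero] at h3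
    have := h3.symm
    simpa using this
  -- g (φ X) ζ = 0 for all X
  have hφXζ : ∀ X : V, g (φ X) ζ = 0 := by
    intro X
    rw [hskew X ζ, hφζ, map_zero]
    simp
  -- basic products
  have hgNξ : g N ξ = 1 := by rw [hsymm]; exact hξN
  have gφξφξ : g (φ ξ) (φ ξ) = -(b * b) := by rw [hcomp, hξξ, ← hb]; ring
  have gφNφN : g (φ N) (φ N) = -(a * a) := by rw [hcomp, hNN, ← ha]; ring
  have gφξφN : g (φ ξ) (φ N) = 1 - b * a := by rw [hcomp, hξN, ← hb, ← ha]
  have gφNφξ : g (φ N) (φ ξ) = 1 - a * b := by rw [hcomp, hgNξ, ← hb, ← ha]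
  have gφξξ : g (φ ξ) ξ = 0 := by
    have h1 := hskew ξ ξ
    have h2 := hsymm (φ ξ) ξ
    linarith
  have gφNN : g (φ N) N = 0 := by
    have h1 := hskew N N
    have h2 := hsymm (φ N) N
    linarith
  obtain ⟨c, hc⟩ : ∃ c, g (φ ξ) N = c := ⟨_, rfl⟩
  have gNφξ : g N (φ ξ) = c := by rw [hsymm]; exact hc
  have gφNξ : g (φ N) ξ = -c := by rw [hskew N ξ, gNφξ]
  have gξφN : g ξ (φ N) = -c := by
    have h := hskew ξ N
    rw [hc] at h; linarith
  have gξφξ : g ξ (φ ξ) = 0 := by rw [hsymm]; exact gφξξ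
  have gNφN : g N (φ N) = 0 := by rw [hsymm]; exact gφNN
  have gφξW : g (φ ξ) W' = 0 := by rw [hsymm]; exact hW'φξ
  have gφNW : g (φ N) W' = 0 := by rw [hsymm]; exact hW'φN
  have gξW : g ξ W' = 0 := by rw [hsymm]; exact hW'ξ
  have gNW : g N W' = 0 := by rw [hsymm]; exact hW'N
  -- expansions
  have E0 : f₁ * (1 - b * a) + f₂ * (-(b * b)) + b * c = 0 := by
    have h := hφXζ ξ
    rw [hζ] at h
    simp only [map_add, map_smul, smul_eq_mul] at h
    rw [gφξW, gφξφN, gφξφξ, gφξξ, hc] at h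
    linarith
  have E1 : f₁ * (-(a * a)) + f₂ * (1 - a * b) - a * c = 0 := by
    have h := hφXζ N
    rw [hζ] at h
    simp only [map_add, map_smul, smul_eq_mul] at h
    rw [gφNW, gφNφN, gφNφξ, gφNξ, gφNN] at h
    linarith
  have E2 : f₁ * c = 0 := by
    have h := hgζ ξ
    rw [hζ] at h
    simp only [map_add, map_smul, smul_eq_mul] at h
    rw [gξW, gξφN, gξφξ, hξξ, hξN, ← hb] at h
    linarith
  have E3 : f₂ * c = 0 := by
    have h := hgζ N
    rw [hζ] at h
    simp only [map_add, map_smul, smul_eq_mul] at h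
    rw [gNW, gNφN, gNφξ, hgNξ, hNN, ← ha] at h
    linarith
  have key1 : b ^ 2 * f₂ = f₁ * (1 - a * b) := by
    rcases eq_or_ne c 0 with h | h
    · rw [h] at E0; linear_combination -E0
    · have hf₁ : f₁ = 0 := by
        rcases mul_eq_zero.mp E2 with h' | h'; exact h'; exact absurd h' h
      have hf₂ : f₂ = 0 := by
        rcases mul_eq_zero.mp E3 with h' | h'; exact h'; exact absurd h' h
      rw [hf₁, hf₂]; ring
  have key2 : a ^ 2 * f₁ = f₂ * (1 - a * b) := by
    rcases eq_or_ne c 0 with h | h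
    · rw [h] at E1; linear_combination -E1
    · have hf₁ : f₁ = 0 := by
        rcases mul_eq_zero.mp E2 with h' | h'; exact h'; exact absurd h' h
      have hf₂ : f₂ = 0 := by
        rcases mul_eq_zero.mp E3 with h' | h'; exact h'; exact absurd h' h
      rw [hf₁, hf₂]; ring
  refine ⟨key1, key2, ?_, ?_⟩
  · linear_combination b ^ 2 * key2 + (1 - a * b) * key1
  · linear_combination a ^ 2 * key1 + (1 - a * b) * key2
end

section
/- In the setting of a proper inascreen lightlike hypersurface: if the induced 1-form ω (defined by φX = φ'X + ω(X)ζ for tangent X) vanishes identically, then η(X) = 0 for all tangent X; in particular b = η(ξ) = 0. Hence there exists no invariant (ω ≡ 0) proper inascreen hypersurface (where b ≠ 0). -/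
/-- If the induced 1-form ω vanishes identically on T, then η vanishes on T;
in particular b = η(ξ) = 0. Hence no invariant proper inascreen hypersurface. -/
theorem no_invariant_proper_inascreen
    {V : Type*} [AddCommGroup V] [Module ℝ V]
    (φ : V →ₗ[ℝ] V) (ζ : V) (η : V →ₗ[ℝ] ℝ)
    (hηζ : η ζ = 1)
    (hφ2 : ∀ X : V, φ (φ X) = -X + η X • ζ)
    (T : Submodule ℝ V) (hζT : ζ ∉ T)
    (φ' : V → V) (ω : V → ℝ)
    (hφ'T : ∀ X ∈ T, φ' X ∈ T)
    (hdec : ∀ X ∈ T, φ X = φ' X + ω X • ζ)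
    (ξ : V) (hξT : ξ ∈ T) (b : ℝ) (hb : b = η ξ)
    (hω : ∀ X ∈ T, ω X = 0) :
    (∀ X ∈ T, η X = 0) ∧ b = 0 := by
  have key : ∀ X ∈ T, η X = 0 := by
    intro X hX
    have h1 : φ X = φ' X := by rw [hdec X hX, hω X hX]; simp
    have hφX : φ X ∈ T := h1 ▸ hφ'T X hX
    have h2 : φ (φ X) = φ' (φ X) := by rw [hdec _ hφX, hω _ hφX]; simp
    have h3 : η X • ζ = φ' (φ X) + X := by
      have h := hφ2 X
      rw [h2] at h
      linear_combination (norm := abel) -h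
    by_contra hne
    apply hζT
    have hm : η X • ζ ∈ T := by rw [h3]; exact T.add_mem (hφ'T _ hφX) hX
    have := T.smul_mem (η X)⁻¹ hm
    rwa [smul_smul, inv_mul_cancel₀ hne, one_smul] at this
  exact ⟨key, hb ▸ key ξ hξT⟩
end

section
/- Let the setting be a proper inascreen hypersurface with b = η(ξ) ≠ 0, ξ ∈ T lightlike, φξ ∈ T (so ω(ξ)=0, φ'ξ = φξ). If g(φ'X,φ'Y) = g(X,Y) for all X,Y ∈ T (i.e., (g,φ') is almost Hermitian on T), then b² = 0, a contradiction. Hence (g,φ') is never almost Hermitian with respect to the induced metric g. -/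
/-- For a proper inascreen hypersurface (b = η(ξ) ≠ 0, ω(ξ) = 0), the pair
(g, φ') is never almost Hermitian on T. -/
theorem no_hermitian_induced_metric
    {V : Type*} [AddCommGroup V] [Module ℝ V]
    (g : V →ₗ[ℝ] V →ₗ[ℝ] ℝ) (φ : V →ₗ[ℝ] V) (ζ : V) (η : V →ₗ[ℝ] ℝ)
    (hsymm : ∀ X Y : V, g X Y = g Y X)
    (hηζ : η ζ = 1)
    (hφ2 : ∀ X : V, φ (φ X) = -X + η X • ζ)
    (hcomp : ∀ X Y : V, g (φ X) (φ Y) = g X Y - η X * η Y)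
    (hgζ : ∀ X : V, g X ζ = η X)
    (hskew : ∀ X Y : V, g (φ X) Y = -(g X (φ Y)))
    (T : Submodule ℝ V) (hζT : ζ ∉ T)
    (φ' : V → V) (ω : V → ℝ)
    (hφ'T : ∀ X ∈ T, φ' X ∈ T)
    (hdec : ∀ X ∈ T, φ X = φ' X + ω X • ζ)
    (ξ : V) (hξT : ξ ∈ T) (hξξ : g ξ ξ = 0)
    (hωξ : ω ξ = 0) (b : ℝ) (hb : b = η ξ) (hbne : b ≠ 0)
    (hherm : ∀ X ∈ T, ∀ Y ∈ T, g (φ' X) (φ' Y) = g X Y) :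
    False := by
  have hφ'ξ : φ' ξ = φ ξ := by
    have := hdec ξ hξT
    rw [hωξ, zero_smul, add_zero] at this
    exact this.symm
  have h1 := hherm ξ hξT ξ hξT
  rw [hφ'ξ, hcomp, hξξ, ← hb] at h1
  have : b * b = 0 := by linarith
  exact hbne (by nlinarith)
end

section
/- Proper inascreen setting (b = η(ξ) ≠ 0, ω(ξ)=0): if φ' is skew-symmetric with respect to g on T, i.e., g(φ'X,Y) = -g(X,φ'Y) for all X,Y ∈ T, then ω ≡ 0 on T. Combined with the nonexistence of invariant proper inascreen hypersurfaces, φ' is never g-skew-symmetric. -/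
/-- For a proper inascreen hypersurface (b = η(ξ) ≠ 0, ω(ξ)=0): if φ' is
g-skew-symmetric on T, then ω ≡ 0 on T; combined with the nonexistence of
invariant proper inascreen hypersurfaces, this is impossible. -/
theorem no_skew_symmetric_induced_structure
    {V : Type*} [AddCommGroup V] [Module ℝ V]
    (g : V →ₗ[ℝ] V →ₗ[ℝ] ℝ) (φ : V →ₗ[ℝ] V) (ζ : V) (η : V →ₗ[ℝ] ℝ)
    (hsymm : ∀ X Y : V, g X Y = g Y X)
    (hηζ : η ζ = 1)
    (hφ2 : ∀ X : V, φ (φ X) = -X + η X • ζ)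
    (hcomp : ∀ X Y : V, g (φ X) (φ Y) = g X Y - η X * η Y)
    (hgζ : ∀ X : V, g X ζ = η X)
    (hskew : ∀ X Y : V, g (φ X) Y = -(g X (φ Y)))
    (T : Submodule ℝ V) (hζT : ζ ∉ T)
    (φ' : V → V) (ω : V → ℝ)
    (hφ'T : ∀ X ∈ T, φ' X ∈ T)
    (hdec : ∀ X ∈ T, φ X = φ' X + ω X • ζ)
    (ξ : V) (hξT : ξ ∈ T) (hξξ : g ξ ξ = 0)
    (hωξ : ω ξ = 0) (b : ℝ) (hb : b = η ξ) (hbne : b ≠ 0)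
    (hskew' : ∀ X ∈ T, ∀ Y ∈ T, g (φ' X) Y = -(g X (φ' Y))) :
    (∀ X ∈ T, ω X = 0) ∧ False := by
  have hgζ' : ∀ X : V, g ζ X = η X := fun X => (hsymm ζ X).trans (hgζ X)
  have key : ∀ X ∈ T, ∀ Y ∈ T, ω X * η Y = -(ω Y * η X) := by
    intro X hX Y hY
    have h1 := hskew X Y
    rw [hdec X hX, hdec Y hY] at h1
    simp only [map_add, map_smul, smul_eq_mul, LinearMap.add_apply,
      LinearMap.smul_apply] at h1
    rw [hskew' X hX Y hY, hgζ', hgζ] at h1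
    linarith
  have hω : ∀ X ∈ T, ω X = 0 := by
    intro X hX
    have h := key X hX ξ hξT
    rw [hωξ, ← hb] at h
    simp at h
    rcases h with h | h
    · exact h
    · exact absurd h hbne
  refine ⟨hω, ?_⟩
  have hφξ : φ ξ = φ' ξ := by rw [hdec ξ hξT, hωξ, zero_smul, add_zero]
  have hpT : φ' ξ ∈ T := hφ'T ξ hξT
  have hφp : φ (φ' ξ) = φ' (φ' ξ) := by
    rw [hdec _ hpT, hω _ hpT, zero_smul, add_zero]
  have h2 : φ (φ ξ) ∈ T := by rw [hφξ, hφp]; exact hφ'T _ hpT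
  rw [hφ2 ξ] at h2
  have hζ : η ξ • ζ ∈ T := by
    have := T.add_mem h2 hξT
    simpa using this
  have : ζ ∈ T := by
    have := T.smul_mem (η ξ)⁻¹ hζ
    rwa [smul_smul, inv_mul_cancel₀ (hb ▸ hbne), one_smul] at this
  exact hζT this
end

section
/- Let (V,g,φ,ζ,η) be an almost contact metric vector space, ξ,N lightlike with g(ξ,N)=1, a=η(N), b=η(ξ), and suppose 2ab = 1 and ζ = f₁φN + f₂φξ + aξ + bN. Then applying φ and using φζ=0 gives aφξ + bφN - f₂ξ - f₁N + fζ = 0 with f = af₁ + bf₂; moreover af = f₂, bf = f₁, and ff₂ + a ≠ 0, ff₁ + b ≠ 0, so φξ = λφN with λ = -(ff₁+b)/(ff₂+a) ≠ 0. -/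
/-- The case 2ab = 1: ζ = f₁φN + f₂φξ + aξ + bN forces, with f = af₁ + bf₂,
the relation aφξ + bφN - f₂ξ - f₁N + fζ = 0, af = f₂, bf = f₁,
ff₂ + a ≠ 0, ff₁ + b ≠ 0, and φξ = λφN with λ = -(ff₁+b)/(ff₂+a) ≠ 0. -/
theorem ascreen_case_two_ab_eq_one
    {V : Type*} [AddCommGroup V] [Module ℝ V]
    (g : V →ₗ[ℝ] V →ₗ[ℝ] ℝ) (φ : V →ₗ[ℝ] V) (ζ : V) (η : V →ₗ[ℝ] ℝ)
    (hsymm : ∀ X Y : V, g X Y = g Y X)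
    (hnondeg : ∀ X : V, (∀ Y : V, g X Y = 0) → X = 0)
    (hηζ : η ζ = 1)
    (hφ2 : ∀ X : V, φ (φ X) = -X + η X • ζ)
    (hcomp : ∀ X Y : V, g (φ X) (φ Y) = g X Y - η X * η Y)
    (hgζ : ∀ X : V, g X ζ = η X)
    (ξ N : V) (hξξ : g ξ ξ = 0) (hNN : g N N = 0) (hξN : g ξ N = 1)
    (a b : ℝ) (ha : a = η N) (hb : b = η ξ)
    (hab : 2 * a * b = 1)
    (f₁ f₂ : ℝ)
    (hζ : ζ = f₁ • φ N + f₂ • φ ξ + a • ξ + b • N)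
    (f : ℝ) (hf : f = a * f₁ + b * f₂) :
    a • φ ξ + b • φ N - f₂ • ξ - f₁ • N + f • ζ = 0 ∧
    a * f = f₂ ∧ b * f = f₁ ∧
    f * f₂ + a ≠ 0 ∧ f * f₁ + b ≠ 0 ∧
    (-(f * f₁ + b) / (f * f₂ + a) ≠ 0 ∧
      φ ξ = (-(f * f₁ + b) / (f * f₂ + a)) • φ N) := by
  have ha0 : a ≠ 0 := fun h => by rw [h] at hab; norm_num at hab
  have hb0 : b ≠ 0 := fun h => by rw [h] at hab; norm_num at hab
  -- φ ζ = 0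
  have hφζ2 : φ (φ ζ) = 0 := by rw [hφ2, hηζ, one_smul, neg_add_cancel]
  have hφζeq : φ ζ = η (φ ζ) • ζ := by
    have h1 : φ (φ (φ ζ)) = -φ ζ + η (φ ζ) • ζ := hφ2 (φ ζ)
    rw [hφζ2, map_zero] at h1
    linear_combination (norm := module) h1
  have hηφζ : η (φ ζ) = 0 := by
    set t := η (φ ζ) with ht
    have h3 := congrArg φ hφζeq
    rw [hφζ2, map_smul, hφζeq, smul_smul] at h3
    have h4 := congrArg η h3
    simp only [map_zero, map_smul, hηζ, smul_eq_mul, mul_one] at h4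
    nlinarith [sq_nonneg t]
  have hφζ : φ ζ = 0 := by rw [hφζeq, hηφζ, zero_smul]
  -- η ∘ φ = 0
  have hηφ : ∀ X : V, η (φ X) = 0 := by
    intro X
    have h1 : φ (φ (φ X)) = -φ X := by
      rw [hφ2 X, map_add, map_neg, map_smul, hφζ, smul_zero, add_zero]
    have h2 : φ (φ (φ X)) = -φ X + η (φ X) • ζ := hφ2 (φ X)
    have h3 : η (φ X) • ζ = 0 := by rw [h1] at h2; linear_combination (norm := module) -h2
    have h4 := congrArg η h3
    simp only [map_zero, map_smul, hηζ, smul_eq_mul, mul_one] at h4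
    exact h4
  -- g (φ X) ζ = 0
  have hgφζ : ∀ X : V, g (φ X) ζ = 0 := fun X => by rw [hgζ, hηφ]
  -- antisymmetry: g (φ X) Y = - g X (φ Y)
  have hanti : ∀ X Y : V, g (φ X) Y = - g X (φ Y) := by
    intro X Y
    have h1 := hcomp X (φ Y)
    rw [hηφ, mul_zero, sub_zero, hφ2 Y] at h1
    simp only [map_add, map_neg, map_smul, smul_eq_mul] at h1
    rw [hgφζ] at h1
    linarith
  have hself : ∀ X : V, g X (φ X) = 0 := by
    intro X
    have h1 := hanti X X
    have h2 := hsymm (φ X) X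
    linarith
  -- key scalar: c = g (φ ξ) N
  set c := g (φ ξ) N with hc
  have hgφNξ : g (φ N) ξ = -c := by
    rw [hanti N ξ, hc, hsymm]
  have hgφξξ : g (φ ξ) ξ = 0 := by rw [hsymm, hself]
  have hgφNN : g (φ N) N = 0 := by rw [hsymm, hself]
  have hgφξφN : g (φ ξ) (φ N) = 1 - b * a := by rw [hcomp, hξN, ← hb, ← ha]
  have hgφξφξ : g (φ ξ) (φ ξ) = -(b * b) := by rw [hcomp, hξξ, ← hb]; ring
  have hgφNφN : g (φ N) (φ N) = -(a * a) := by rw [hcomp, hNN, ← ha]; ring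
  have hgφNφξ : g (φ N) (φ ξ) = 1 - a * b := by
    rw [hcomp, hsymm, hξN, ← hb, ← ha]
  -- pairings of hζ
  have e1 : f₁ * c = 0 := by
    have h := congrArg (fun z => g z ξ) hζ
    simp only [map_add, map_smul, LinearMap.add_apply, LinearMap.smul_apply,
      smul_eq_mul] at h
    rw [hsymm ζ ξ, hgζ, ← hb, hgφNξ, hgφξξ, hξξ, hsymm N ξ, hξN] at h
    linarith
  have e2 : f₂ * c = 0 := by
    have h := congrArg (fun z => g z N) hζ
    simp only [map_add, map_smul, LinearMap.add_apply, LinearMap.smul_apply,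
      smul_eq_mul] at h
    rw [hsymm ζ N, hgζ, ← ha, hgφNN, ← hc, hξN, hNN] at h
    linarith
  have e3 : f₁ * (1 - a * b) - f₂ * (b * b) + b * c = 0 := by
    have h := congrArg (fun z => g (φ ξ) z) hζ
    simp only [map_add, map_smul, smul_eq_mul] at h
    rw [hgφζ, hgφξφN, hgφξφξ, hgφξξ, ← hc] at h
    linear_combination -h
  have e4 : -(f₁ * (a * a)) + f₂ * (1 - a * b) - a * c = 0 := by
    have h := congrArg (fun z => g (φ N) z) hζ
    simp only [map_add, map_smul, smul_eq_mul] at h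
    rw [hgφζ, hgφNφN, hgφNφξ, hgφNξ, hgφNN] at h
    linear_combination -h
  -- c = 0
  have hc0 : c = 0 := by
    by_contra hcn
    have h1 : f₁ = 0 := by
      rcases mul_eq_zero.mp e1 with h | h; exact h; exact absurd h hcn
    have h2 : f₂ = 0 := by
      rcases mul_eq_zero.mp e2 with h | h; exact h; exact absurd h hcn
    rw [h1, h2] at e3
    simp only [zero_mul, mul_zero, sub_zero, zero_sub, zero_add] at e3
    exact hcn (by
      rcases mul_eq_zero.mp e3 with h | h
      · exact absurd h hb0
      · exact h)
  rw [hc0] at e3 e4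
  -- scalar relations
  have haf : a * f = f₂ := by linear_combination a * hf - e4
  have hbf : b * f = f₁ := by linear_combination b * hf - e3
  -- ff₂ + a ≠ 0, ff₁ + b ≠ 0
  have hA : f * f₂ + a = a * (f ^ 2 + 1) := by rw [← haf]; ring
  have hB : f * f₁ + b = b * (f ^ 2 + 1) := by rw [← hbf]; ring
  have hfsq : f ^ 2 + 1 ≠ 0 := by positivity
  have hA0 : f * f₂ + a ≠ 0 := by rw [hA]; exact mul_ne_zero ha0 hfsq
  have hB0 : f * f₁ + b ≠ 0 := by rw [hB]; exact mul_ne_zero hb0 hfsq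
  -- the vector relation
  have star : a • φ ξ + b • φ N - f₂ • ξ - f₁ • N + f • ζ = 0 := by
    have h := congrArg φ hζ
    rw [hφζ] at h
    simp only [map_add, map_smul, hφ2 N, hφ2 ξ, ← ha, ← hb] at h
    rw [hf]
    linear_combination (norm := module) -h
  -- φ ξ = λ • φ N
  have key : (a + f * f₂) • φ ξ + (b + f * f₁) • φ N = 0 := by
    have h := star
    rw [hζ] at h
    rw [← haf, ← hbf] at h ⊢
    linear_combination (norm := module) h
  have hlam : φ ξ = (-(f * f₁ + b) / (f * f₂ + a)) • φ N := by
    have h7 : (f * f₂ + a) • φ ξ = (f * f₂ + a) • ((-(f * f₁ + b) / (f * f₂ + a)) • φ N) := by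
      rw [smul_smul]
      have hm : (f * f₂ + a) * (-(f * f₁ + b) / (f * f₂ + a)) = -(f * f₁ + b) := by
        field_simp
      rw [hm]
      linear_combination (norm := module) key
    exact smul_right_injective V hA0 h7
  refine ⟨star, haf, hbf, hA0, hB0, ⟨?_, hlam⟩⟩
  exact div_ne_zero (neg_ne_zero.mpr hB0) hA0
end

section
/- Dichotomy theorem: Let (V,g,φ,ζ,η) be an almost contact metric vector space, ξ,N lightlike with g(ξ,N)=1, a=η(N), b=η(ξ), and decompose ζ = W' + f₁φN + f₂φξ + aξ + bN with W' orthogonal to ξ, N, φξ, φN. Then exactly one of the following holds: (1) 2ab=1, W'=0, and span{φξ}=span{φN} (ascreen case, ζ ∈ span{ξ,N}); or (2) 2ab≠1, f₁=f₂=0, and ζ = W' + aξ + bN with g(W',W') = 1-2ab ≠ 0, so W' ≠ 0 (inascreen case). -/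
/-- Dichotomy: the structure vector field ζ is either of ascreen type
(2ab = 1, W' = 0, span{φξ} = span{φN}) or of inascreen type
(2ab ≠ 1, f₁ = f₂ = 0, g(W',W') = 1 - 2ab ≠ 0, so W' ≠ 0). -/
theorem ascreen_inascreen_dichotomy
    {V : Type*} [AddCommGroup V] [Module ℝ V]
    (g : V →ₗ[ℝ] V →ₗ[ℝ] ℝ) (φ : V →ₗ[ℝ] V) (ζ : V) (η : V →ₗ[ℝ] ℝ)
    (hsymm : ∀ X Y : V, g X Y = g Y X)
    (hnondeg : ∀ X : V, (∀ Y : V, g X Y = 0) → X = 0)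
    (hηζ : η ζ = 1)
    (hφ2 : ∀ X : V, φ (φ X) = -X + η X • ζ)
    (hcomp : ∀ X Y : V, g (φ X) (φ Y) = g X Y - η X * η Y)
    (hgζ : ∀ X : V, g X ζ = η X)
    (ξ N : V) (hξξ : g ξ ξ = 0) (hNN : g N N = 0) (hξN : g ξ N = 1)
    (a b : ℝ) (ha : a = η N) (hb : b = η ξ)
    (W' : V) (f₁ f₂ : ℝ)
    (hW'ξ : g W' ξ = 0) (hW'N : g W' N = 0)
    (hW'φξ : g W' (φ ξ) = 0) (hW'φN : g W' (φ N) = 0)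
    (hscreen : ∀ W : V, g W ξ = 0 → g W N = 0 → g W (φ ξ) = 0 →
      g W (φ N) = 0 → g W W = 0 → W = 0)
    (hζ : ζ = W' + f₁ • φ N + f₂ • φ ξ + a • ξ + b • N) :
    (2 * a * b = 1 ∧ W' = 0 ∧
      Submodule.span ℝ {φ ξ} = Submodule.span ℝ {φ N}) ∨
    (2 * a * b ≠ 1 ∧ f₁ = 0 ∧ f₂ = 0 ∧
      g W' W' = 1 - 2 * a * b ∧ W' ≠ 0) := by
  have hgζ' : ∀ X : V, g ζ X = η X := fun X => by rw [hsymm ζ X, hgζ]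
  have hgζζ : g ζ ζ = 1 := by rw [hgζ, hηζ]
  -- η ∘ φ = 0
  have hηφ : ∀ X : V, η (φ X) = 0 := by
    intro X
    have h1 := hcomp (φ X) (φ X)
    have h2 := hcomp X X
    rw [hφ2 X] at h1
    simp only [map_add, map_neg, map_smul, LinearMap.add_apply, LinearMap.neg_apply,
      LinearMap.smul_apply, smul_eq_mul, hgζζ, hgζ, hgζ'] at h1
    nlinarith [sq_nonneg (η (φ X))]
  -- skew symmetry of g(φ·,·)
  have hskew : ∀ X Y : V, g (φ X) Y = - g X (φ Y) := by
    intro X Y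
    have hY : Y = η Y • ζ - φ (φ Y) := by rw [hφ2 Y]; abel
    calc g (φ X) Y = g (φ X) (η Y • ζ - φ (φ Y)) := by rw [← hY]
      _ = η Y * g (φ X) ζ - g (φ X) (φ (φ Y)) := by
          simp [map_sub, map_smul]
      _ = η Y * η (φ X) - (g X (φ Y) - η X * η (φ Y)) := by rw [hgζ, hcomp]
      _ = - g X (φ Y) := by rw [hηφ, hηφ]; ring
  -- basic products
  have hφξξ : g (φ ξ) ξ = 0 := by
    have h := hskew ξ ξ
    have h2 : g ξ (φ ξ) = g (φ ξ) ξ := hsymm _ _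
    linarith [h, h2.symm ▸ h]
  have hφNN : g (φ N) N = 0 := by
    have h := hskew N N
    rw [hsymm N (φ N)] at h
    linarith
  set c : ℝ := g (φ N) ξ with hc
  have hφξN : g (φ ξ) N = -c := by
    rw [hskew ξ N, hsymm ξ (φ N)]
  have hφξφξ : g (φ ξ) (φ ξ) = -b ^ 2 := by
    rw [hcomp, hξξ, ← hb]; ring
  have hφNφN : g (φ N) (φ N) = -a ^ 2 := by
    rw [hcomp, hNN, ← ha]; ring
  have hφξφN : g (φ ξ) (φ N) = 1 - a * b := by
    rw [hcomp, hξN, ← hb, ← ha]; ring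
  -- expansion of g X ζ
  have hexp : ∀ X : V, η X =
      g X W' + f₁ * g X (φ N) + f₂ * g X (φ ξ) + a * g X ξ + b * g X N := by
    intro X
    rw [← hgζ X]
    conv_lhs => rw [hζ]
    simp [map_add, map_smul]
  have hC₁ : f₁ * c = 0 := by
    have h := hexp ξ
    rw [← hb, hsymm ξ W', hW'ξ, hsymm ξ (φ N), hsymm ξ (φ ξ), hφξξ, hξξ, hξN] at h
    rw [← hc] at h
    linarith
  have hC₂ : f₂ * c = 0 := by
    have h := hexp N
    rw [← ha, hsymm N W', hW'N, hsymm N (φ N), hφNN, hsymm N (φ ξ), hφξN,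
      hsymm N ξ, hξN, hNN] at h
    linarith
  have hA : f₁ * (1 - a * b) - f₂ * b ^ 2 - b * c = 0 := by
    have h := hexp (φ ξ)
    rw [hηφ, hsymm (φ ξ) W', hW'φξ, hφξφN, hφξφξ, hφξξ, hφξN] at h
    linarith
  have hB : -(f₁ * a ^ 2) + f₂ * (1 - a * b) + a * c = 0 := by
    have h := hexp (φ N)
    rw [hηφ, hsymm (φ N) W', hW'φN, hφNφN, hsymm (φ N) (φ ξ), hφξφN, hφNN] at h
    rw [← hc] at h
    linarith
  -- g(W',W') = 1 - 2ab
  have hηW : η W' = 1 - 2 * a * b := by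
    have h := congrArg η hζ
    simp only [map_add, map_smul, smul_eq_mul, hηφ, hηζ, ← ha, ← hb] at h
    linarith
  have hWW : g W' W' = 1 - 2 * a * b := by
    have h := hexp W'
    rw [hηW, hW'ξ, hW'N, hW'φξ, hW'φN] at h
    linarith
  by_cases h2ab : 2 * a * b = 1
  · -- ascreen case
    left
    have ha0 : a ≠ 0 := by intro h0; rw [h0] at h2ab; norm_num at h2ab
    have hb0 : b ≠ 0 := by intro h0; rw [h0] at h2ab; norm_num at h2ab
    have hW0 : W' = 0 := hscreen W' hW'ξ hW'N hW'φξ hW'φN (by rw [hWW]; linarith)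
    have hc0 : c = 0 := by
      have hbc2 : b * c ^ 2 = 0 := by
        linear_combination (-c) * hA + (1 - a*b) * hC₁ - b^2 * hC₂
      have hcc : c ^ 2 = 0 := by
        rcases mul_eq_zero.mp hbc2 with h | h
        · exact absurd h hb0
        · exact h
      exact pow_eq_zero_iff (two_ne_zero) |>.mp hcc
    -- u := a • φ ξ + b • φ N = 0
    have hu : a • φ ξ + b • φ N = 0 := by
      apply hscreen
      · simp only [map_add, map_smul, LinearMap.add_apply, LinearMap.smul_apply, smul_eq_mul]
        rw [hφξξ, ← hc, hc0]; ring
      · simp only [map_add, map_smul, LinearMap.add_apply, LinearMap.smul_apply, smul_eq_mul]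
        rw [hφξN, hφNN, hc0]; ring
      · simp only [map_add, map_smul, LinearMap.add_apply, LinearMap.smul_apply, smul_eq_mul]
        rw [hφξφξ, hsymm (φ N) (φ ξ), hφξφN]
        linear_combination (-b) * h2ab
      · simp only [map_add, map_smul, LinearMap.add_apply, LinearMap.smul_apply, smul_eq_mul]
        rw [hφξφN, hφNφN]
        linear_combination (-a) * h2ab
      · simp only [map_add, map_smul, LinearMap.add_apply, LinearMap.smul_apply, smul_eq_mul]
        rw [hφξφξ, hφξφN, hsymm (φ N) (φ ξ), hφξφN, hφNφN]
        linear_combination (-2*a*b) * h2ab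
    refine ⟨h2ab, hW0, ?_⟩
    have hφξ : φ ξ = (a⁻¹ * (-b)) • φ N := by
      have h1 : a • φ ξ = (-b) • φ N := by
        rw [neg_smul]
        rw [add_eq_zero_iff_eq_neg] at hu
        exact hu
      rw [mul_smul, ← h1, inv_smul_smul₀ ha0]
    have hφN : φ N = (b⁻¹ * (-a)) • φ ξ := by
      have h1 : b • φ N = (-a) • φ ξ := by
        rw [neg_smul]
        rw [add_comm, add_eq_zero_iff_eq_neg] at hu
        exact hu
      rw [mul_smul, ← h1, inv_smul_smul₀ hb0]
    apply le_antisymm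
    · rw [Submodule.span_le, Set.singleton_subset_iff]
      exact Submodule.mem_span_singleton.mpr ⟨a⁻¹ * (-b), hφξ.symm⟩
    · rw [Submodule.span_le, Set.singleton_subset_iff]
      exact Submodule.mem_span_singleton.mpr ⟨b⁻¹ * (-a), hφN.symm⟩
  · -- inascreen case
    right
    have hd : 1 - 2 * a * b ≠ 0 := fun h => h2ab (by linarith)
    have hf₁ : f₁ = 0 := by
      have h1 : f₁ ^ 2 * (1 - 2 * a * b) = 0 := by
        linear_combination (f₁ * (1 - a * b)) * hA + (f₁ * b ^ 2) * hB +
          (b - 2 * a * b ^ 2) * hC₁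
      rcases mul_eq_zero.mp h1 with h | h
      · exact pow_eq_zero_iff two_ne_zero |>.mp h
      · exact absurd h hd
    have hf₂ : f₂ = 0 := by
      have h1 : f₂ ^ 2 * (1 - 2 * a * b) = 0 := by
        linear_combination (f₂ * a ^ 2) * hA + (f₂ * (1 - a * b)) * hB +
          (2 * a ^ 2 * b - a) * hC₂
      rcases mul_eq_zero.mp h1 with h | h
      · exact pow_eq_zero_iff two_ne_zero |>.mp h
      · exact absurd h hd
    refine ⟨h2ab, hf₁, hf₂, hWW, ?_⟩
    intro h0
    rw [h0] at hWW
    simp at hWW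
    exact hd (by linarith)
end

section
/- Let (V,g,φ,ζ,η) be an almost contact metric vector space, ξ,N lightlike with g(ξ,N)=1, a=η(N), b=η(ξ), and D' a subspace orthogonal to ξ, N, φξ, φN on which g is nondegenerate. If φD' ⊆ D' then for every X' ∈ D': a·η(X') = 0 and b·η(X') = 0; hence either a=b=0 or η vanishes on D'. -/
/-- If D' (orthogonal to ξ, N, φξ, φN) is φ-invariant, then aη(X') = 0 and
bη(X') = 0 for every X' ∈ D'; hence a = b = 0 or η vanishes on D'. -/
theorem phi_invariant_screen_characterization
    {V : Type*} [AddCommGroup V] [Module ℝ V]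
    (g : V →ₗ[ℝ] V →ₗ[ℝ] ℝ) (φ : V →ₗ[ℝ] V) (ζ : V) (η : V →ₗ[ℝ] ℝ)
    (hsymm : ∀ X Y : V, g X Y = g Y X)
    (hηζ : η ζ = 1)
    (hφ2 : ∀ X : V, φ (φ X) = -X + η X • ζ)
    (hcomp : ∀ X Y : V, g (φ X) (φ Y) = g X Y - η X * η Y)
    (ξ N : V) (hξξ : g ξ ξ = 0) (hNN : g N N = 0) (hξN : g ξ N = 1)
    (a b : ℝ) (ha : a = η N) (hb : b = η ξ)
    (D' : Submodule ℝ V)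
    (horth : ∀ X ∈ D', g X ξ = 0 ∧ g X N = 0 ∧ g X (φ ξ) = 0 ∧
      g X (φ N) = 0)
    (hnondegD' : ∀ X ∈ D', (∀ Y ∈ D', g X Y = 0) → X = 0)
    (hinv : ∀ X ∈ D', φ X ∈ D') :
    (∀ X ∈ D', a * η X = 0 ∧ b * η X = 0) ∧
      ((a = 0 ∧ b = 0) ∨ ∀ X ∈ D', η X = 0) := by
  have key : ∀ X ∈ D', a * η X = 0 ∧ b * η X = 0 := by
    intro X hX
    obtain ⟨h1, h2, h3, h4⟩ := horth X hX
    obtain ⟨h1', h2', h3', h4'⟩ := horth (φ X) (hinv X hX)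
    constructor
    · have := hcomp X N
      rw [h4', h2] at this
      rw [ha]; linarith [this]
    · have := hcomp X ξ
      rw [h3', h1] at this
      rw [hb]; linarith [this]
  refine ⟨key, ?_⟩
  by_cases hA : a = 0
  · by_cases hB : b = 0
    · exact Or.inl ⟨hA, hB⟩
    · exact Or.inr fun X hX => by
        have := (key X hX).2
        exact (mul_eq_zero.mp this).resolve_left hB
  · exact Or.inr fun X hX => by
      have := (key X hX).1
      exact (mul_eq_zero.mp this).resolve_left hA
end
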